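/- Under the hypotheses of the RHOSVD error bound, assume additionally the stability condition ∑_{ν=1}^R ξ_ν² ≤ C ‖A‖² for some constant C > 0 (here ‖·‖ is the Frobenius norm). Then the RHOSVD approximation satisfies the relative error bound ‖A − A⁰_(r)‖ ≤ √C ‖A‖ ∑_{ℓ=1}^{3} (∑_{k=rₗ+1}^{min(n,R)} σ_{ℓ,k}²)^{1/2}. -/

import Mathlib

/-!
Write `u ℓ ν = P ℓ (a ℓ ν)` for the projected factors. Since `P ℓ` projects onto the leading left
singular vectors of the side matrix, `a ℓ ν - u ℓ ν` is the tail of the SVD expansion of `a ℓ ν`;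
hence `∑ ν, ‖a ℓ ν - u ℓ ν‖² = ∑_{k ≥ r ℓ} σ ℓ k²` and `‖u ℓ ν‖ ≤ ‖a ℓ ν‖ = 1`. The telescoping
identity `a⊗b⊗c - a'⊗b'⊗c' = (a-a')⊗b⊗c + a'⊗(b-b')⊗c + a'⊗b'⊗(c-c')` splits `A - A⁰` into three
canonical (CP) tensors, and Cauchy–Schwarz in `ν` bounds each by `√(∑ ξ²)` times the corresponding
tail. The stability condition turns `√(∑ ξ²)` into `√C ‖A‖`.
-/

open Finset Real

def OrthonormalUpTo {ι : Type*} [Fintype ι] (m : ℕ) (z : ℕ → ι → ℝ) : Prop :=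
  ∀ k < m, ∀ k' < m, ∑ i, z k i * z k' i = if k = k' then 1 else 0

namespace OrthonormalUpTo

variable {ι : Type*} [Fintype ι] {m : ℕ} {z : ℕ → ι → ℝ}

theorem sum_mul_sum_smul (hz : OrthonormalUpTo m z) {s : Finset ℕ} (hs : ∀ k ∈ s, k < m)
    {t : ℕ} (ht : t < m) (c : ℕ → ℝ) :
    ∑ i, z t i * ∑ k ∈ s, c k * z k i = if t ∈ s then c t else 0 := by
  calc ∑ i, z t i * ∑ k ∈ s, c k * z k i = ∑ k ∈ s, c k * ∑ i, z t i * z k i := by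
        simp_rw [mul_sum]
        rw [sum_comm]
        exact sum_congr rfl fun _ _ => sum_congr rfl fun _ _ => by ring
    _ = ∑ k ∈ s, if t = k then c k else 0 :=
        sum_congr rfl fun k hk => by rw [hz t ht k (hs k hk), mul_ite, mul_one, mul_zero]
    _ = _ := sum_ite_eq s t c

theorem sum_sq_sum_smul (hz : OrthonormalUpTo m z) {s : Finset ℕ} (hs : ∀ k ∈ s, k < m)
    (c : ℕ → ℝ) : ∑ i, (∑ k ∈ s, c k * z k i) ^ 2 = ∑ k ∈ s, c k ^ 2 := by
  calc ∑ i, (∑ k ∈ s, c k * z k i) ^ 2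
      = ∑ k ∈ s, c k * ∑ i, z k i * ∑ k' ∈ s, c k' * z k' i := by
        simp_rw [sq, sum_mul, mul_sum]
        rw [sum_comm]
        exact sum_congr rfl fun _ _ => sum_congr rfl fun _ _ => sum_congr rfl fun _ _ => by ring
    _ = ∑ k ∈ s, c k ^ 2 :=
        sum_congr rfl fun k hk => by rw [hz.sum_mul_sum_smul hs (hs k hk), if_pos hk, sq]

end OrthonormalUpTo

section Projection

variable {ι : Type*} [Fintype ι] {m r : ℕ} {z : ℕ → ι → ℝ} {P : ι → ι → ℝ} {c : ℕ → ℝ}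
  {y : ι → ℝ}

theorem sum_proj_mul_eq_sum_range (hz : OrthonormalUpTo m z) (hr : r ≤ m)
    (hP : ∀ i i', P i i' = ∑ t ∈ range r, z t i * z t i')
    (hy : ∀ i, y i = ∑ k ∈ range m, c k * z k i) (i : ι) :
    ∑ i', P i i' * y i' = ∑ k ∈ range r, c k * z k i := by
  have hcoef : ∀ t < m, ∑ i', z t i' * y i' = c t := fun t ht => by
    simp_rw [hy]
    rw [hz.sum_mul_sum_smul (fun k hk => mem_range.mp hk) ht, if_pos (mem_range.mpr ht)]
  calc ∑ i', P i i' * y i' = ∑ t ∈ range r, (∑ i', z t i' * y i') * z t i := by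
        simp_rw [hP, sum_mul]
        rw [sum_comm]
        exact sum_congr rfl fun _ _ => sum_congr rfl fun _ _ => by ring
    _ = _ := sum_congr rfl fun t ht => by
        rw [hcoef t ((mem_range.mp ht).trans_le hr)]

theorem sum_sq_proj_le (hz : OrthonormalUpTo m z) (hr : r ≤ m)
    (hP : ∀ i i', P i i' = ∑ t ∈ range r, z t i * z t i')
    (hy : ∀ i, y i = ∑ k ∈ range m, c k * z k i) :
    ∑ i, (∑ i', P i i' * y i') ^ 2 ≤ ∑ i, y i ^ 2 := by
  simp_rw [sum_proj_mul_eq_sum_range hz hr hP hy, hy]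
  rw [hz.sum_sq_sum_smul (fun k hk => (mem_range.mp hk).trans_le hr),
    hz.sum_sq_sum_smul (fun k hk => mem_range.mp hk)]
  exact sum_le_sum_of_subset_of_nonneg (range_subset_range.mpr hr) fun _ _ _ => sq_nonneg _

theorem sum_sq_sub_proj (hz : OrthonormalUpTo m z) (hr : r ≤ m)
    (hP : ∀ i i', P i i' = ∑ t ∈ range r, z t i * z t i')
    (hy : ∀ i, y i = ∑ k ∈ range m, c k * z k i) :
    ∑ i, (y i - ∑ i', P i i' * y i') ^ 2 = ∑ k ∈ Ico r m, c k ^ 2 := by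
  have hres : ∀ i, y i - ∑ i', P i i' * y i' = ∑ k ∈ Ico r m, c k * z k i := fun i => by
    rw [sum_proj_mul_eq_sum_range hz hr hP hy, hy, sum_Ico_eq_sub _ hr]
  simp_rw [hres]
  exact hz.sum_sq_sum_smul (fun k hk => (mem_Ico.mp hk).2) c

end Projection

theorem sum_sum_sq_sub_proj {ι κ : Type*} [Fintype ι] [Fintype κ] {m r : ℕ}
    {z : ℕ → ι → ℝ} {v : ℕ → κ → ℝ} {P : ι → ι → ℝ} {σ : ℕ → ℝ} {x : κ → ι → ℝ}
    (hz : OrthonormalUpTo m z) (hv : OrthonormalUpTo m v) (hr : r ≤ m)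
    (hP : ∀ i i', P i i' = ∑ t ∈ range r, z t i * z t i')
    (hx : ∀ ν i, x ν i = ∑ k ∈ range m, σ k * v k ν * z k i) :
    ∑ ν, ∑ i, (x ν i - ∑ i', P i i' * x ν i') ^ 2 = ∑ k ∈ Ico r m, σ k ^ 2 := by
  simp_rw [fun ν => sum_sq_sub_proj hz hr hP (hx ν)]
  rw [sum_comm]
  refine sum_congr rfl fun k hk => ?_
  have hk : k < m := (mem_Ico.mp hk).2
  calc ∑ ν, (σ k * v k ν) ^ 2 = σ k ^ 2 * ∑ ν, v k ν * v k ν := by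
        rw [mul_sum]; exact sum_congr rfl fun _ _ => by ring
    _ = σ k ^ 2 := by rw [hv k hk k hk, if_pos rfl, mul_one]

section Tensor

variable {κ ι₁ ι₂ ι₃ : Type*} [Fintype κ]

def cpTensor (ξ : κ → ℝ) (x : κ → ι₁ → ℝ) (y : κ → ι₂ → ℝ) (w : κ → ι₃ → ℝ) :
    ι₁ → ι₂ → ι₃ → ℝ :=
  fun i j k => ∑ ν, ξ ν * x ν i * y ν j * w ν k

theorem cpTensor_sub_cpTensor (ξ : κ → ℝ) (x x' : κ → ι₁ → ℝ) (y y' : κ → ι₂ → ℝ)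
    (w w' : κ → ι₃ → ℝ) :
    cpTensor ξ x y w - cpTensor ξ x' y' w' =
      cpTensor ξ (x - x') y w + cpTensor ξ x' (y - y') w + cpTensor ξ x' y' (w - w') := by
  funext i j k
  simp only [cpTensor, Pi.add_apply, Pi.sub_apply, ← sum_sub_distrib, ← sum_add_distrib]
  exact sum_congr rfl fun _ _ => by ring

variable [Fintype ι₁] [Fintype ι₂] [Fintype ι₃]

noncomputable def frobNorm (T : ι₁ → ι₂ → ι₃ → ℝ) : ℝ := √(∑ i, ∑ j, ∑ k, T i j k ^ 2)

theorem frobNorm_eq_norm (T : ι₁ → ι₂ → ι₃ → ℝ) :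
    frobNorm T = ‖WithLp.toLp 2 (fun p : ι₁ × ι₂ × ι₃ => T p.1 p.2.1 p.2.2)‖ := by
  simp [frobNorm, EuclideanSpace.norm_eq, Fintype.sum_prod_type]

theorem frobNorm_add_le (S T : ι₁ → ι₂ → ι₃ → ℝ) :
    frobNorm (S + T) ≤ frobNorm S + frobNorm T := by
  simp only [frobNorm_eq_norm, Pi.add_apply]
  exact (congrArg norm (WithLp.toLp_add 2 _ _)).trans_le (norm_add_le _ _)

theorem sum_mul_cpTensor (M₁ : ι₁ → ι₁ → ℝ) (M₂ : ι₂ → ι₂ → ℝ) (M₃ : ι₃ → ι₃ → ℝ) (ξ : κ → ℝ)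
    (x : κ → ι₁ → ℝ) (y : κ → ι₂ → ℝ) (w : κ → ι₃ → ℝ) (i : ι₁) (j : ι₂) (k : ι₃) :
    ∑ i', ∑ j', ∑ k', M₁ i i' * M₂ j j' * M₃ k k' * cpTensor ξ x y w i' j' k' =
      cpTensor ξ (fun ν i => ∑ i', M₁ i i' * x ν i') (fun ν j => ∑ j', M₂ j j' * y ν j')
        (fun ν k => ∑ k', M₃ k k' * w ν k') i j k := by
  simp only [cpTensor, mul_sum, sum_mul]
  simp_rw [sum_comm (t := (univ : Finset κ)), sum_comm (s := (univ : Finset ι₃)),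
    sum_comm (s := (univ : Finset ι₂))]
  exact sum_congr rfl fun _ _ => sum_congr rfl fun _ _ => sum_congr rfl fun _ _ =>
    sum_congr rfl fun _ _ => by ring

theorem frobNorm_cpTensor_le (ξ : κ → ℝ) (x : κ → ι₁ → ℝ) (y : κ → ι₂ → ℝ) (w : κ → ι₃ → ℝ)
    {β : κ → ℝ}
    (hβ : ∀ ν, (∑ i, x ν i ^ 2) * (∑ j, y ν j ^ 2) * (∑ k, w ν k ^ 2) ≤ β ν) :
    frobNorm (cpTensor ξ x y w) ≤ √(∑ ν, ξ ν ^ 2) * √(∑ ν, β ν) := by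
  rw [← sqrt_mul' _ (sum_nonneg fun ν _ => (by positivity : (0:ℝ) ≤ _).trans (hβ ν))]
  refine sqrt_le_sqrt ?_
  have hcs : ∀ i j k, cpTensor ξ x y w i j k ^ 2 ≤
      (∑ ν, ξ ν ^ 2) * ∑ ν, x ν i ^ 2 * y ν j ^ 2 * w ν k ^ 2 := fun i j k => by
    simp only [cpTensor, mul_assoc, ← mul_pow]
    exact sum_mul_sq_le_sq_mul_sq _ _ _
  have hsum : ∑ i, ∑ j, ∑ k, ∑ ν, x ν i ^ 2 * y ν j ^ 2 * w ν k ^ 2 =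
      ∑ ν, (∑ i, x ν i ^ 2) * (∑ j, y ν j ^ 2) * (∑ k, w ν k ^ 2) := by
    simp only [sum_mul, mul_sum]
    simp_rw [sum_comm (t := (univ : Finset κ)), sum_comm (s := (univ : Finset ι₃)),
      sum_comm (s := (univ : Finset ι₂))]
  calc ∑ i, ∑ j, ∑ k, cpTensor ξ x y w i j k ^ 2
      ≤ ∑ i, ∑ j, ∑ k, (∑ ν, ξ ν ^ 2) * ∑ ν, x ν i ^ 2 * y ν j ^ 2 * w ν k ^ 2 :=
        sum_le_sum fun i _ => sum_le_sum fun j _ => sum_le_sum fun k _ => hcs i j k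
    _ = (∑ ν, ξ ν ^ 2) * ∑ ν, (∑ i, x ν i ^ 2) * (∑ j, y ν j ^ 2) * (∑ k, w ν k ^ 2) := by
        simp only [← mul_sum, hsum]
    _ ≤ (∑ ν, ξ ν ^ 2) * ∑ ν, β ν :=
        mul_le_mul_of_nonneg_left (sum_le_sum fun ν _ => hβ ν) (by positivity)

theorem frobNorm_cpTensor_sub_cpTensor_le (ξ : κ → ℝ)
    {x x' : κ → ι₁ → ℝ} {y y' : κ → ι₂ → ℝ} {w w' : κ → ι₃ → ℝ}
    (hy : ∀ ν, ∑ j, y ν j ^ 2 ≤ 1) (hw : ∀ ν, ∑ k, w ν k ^ 2 ≤ 1)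
    (hx' : ∀ ν, ∑ i, x' ν i ^ 2 ≤ 1) (hy' : ∀ ν, ∑ j, y' ν j ^ 2 ≤ 1) :
    frobNorm (cpTensor ξ x y w - cpTensor ξ x' y' w') ≤
      √(∑ ν, ξ ν ^ 2) * (√(∑ ν, ∑ i, (x - x') ν i ^ 2) + √(∑ ν, ∑ j, (y - y') ν j ^ 2) +
        √(∑ ν, ∑ k, (w - w') ν k ^ 2)) := by
  rw [cpTensor_sub_cpTensor, mul_add, mul_add]
  refine (frobNorm_add_le _ _).trans (add_le_add ((frobNorm_add_le _ _).trans
    (add_le_add (frobNorm_cpTensor_le ξ _ _ _ fun ν => ?_)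
      (frobNorm_cpTensor_le ξ _ _ _ fun ν => ?_))) (frobNorm_cpTensor_le ξ _ _ _ fun ν => ?_))
  · rw [mul_assoc]
    exact mul_le_of_le_one_right (by positivity) (mul_le_one₀ (hy ν) (by positivity) (hw ν))
  · exact (mul_le_mul_of_nonneg_right (mul_le_of_le_one_left (by positivity) (hx' ν))
      (by positivity)).trans (mul_le_of_le_one_right (by positivity) (hw ν))
  · exact mul_le_of_le_one_left (by positivity) (mul_le_one₀ (hx' ν) (by positivity) (hy' ν))

end Tensor

theorem rhosvd_relative_error_bound_general (n R : ℕ) (r : Fin 3 → ℕ)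
    (ξ : Fin R → ℝ) (a : Fin 3 → Fin R → Fin n → ℝ)
    (ha : ∀ ℓ ν, ∑ i, (a ℓ ν i) ^ 2 = 1)
    (σ : Fin 3 → ℕ → ℝ) (z : Fin 3 → ℕ → Fin n → ℝ) (v : Fin 3 → ℕ → Fin R → ℝ)
    (hz : ∀ ℓ, ∀ k < min n R, ∀ k' < min n R,
      ∑ i, z ℓ k i * z ℓ k' i = if k = k' then 1 else 0)
    (hv : ∀ ℓ, ∀ k < min n R, ∀ k' < min n R,
      ∑ ν, v ℓ k ν * v ℓ k' ν = if k = k' then 1 else 0)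
    (hsvd : ∀ ℓ ν i, a ℓ ν i = ∑ k ∈ Finset.range (min n R), σ ℓ k * z ℓ k i * v ℓ k ν)
    (hr : ∀ ℓ, r ℓ ≤ min n R)
    (A A0 : Fin n → Fin n → Fin n → ℝ)
    (hA : ∀ i j k, A i j k = ∑ ν, ξ ν * a 0 ν i * a 1 ν j * a 2 ν k)
    (P : Fin 3 → Fin n → Fin n → ℝ)
    (hP : ∀ ℓ i i', P ℓ i i' = ∑ t ∈ Finset.range (r ℓ), z ℓ t i * z ℓ t i')
    (hA0 : ∀ i j k, A0 i j k =
      ∑ i', ∑ j', ∑ k', P 0 i i' * P 1 j j' * P 2 k k' * A i' j' k')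
    (C : ℝ)
    (hstab : ∑ ν, (ξ ν) ^ 2 ≤ C * ∑ i, ∑ j, ∑ k, (A i j k) ^ 2) :
    Real.sqrt (∑ i, ∑ j, ∑ k, (A i j k - A0 i j k) ^ 2) ≤
      Real.sqrt C * Real.sqrt (∑ i, ∑ j, ∑ k, (A i j k) ^ 2) *
        ∑ ℓ : Fin 3, Real.sqrt (∑ k ∈ Finset.Ico (r ℓ) (min n R), (σ ℓ k) ^ 2) := by
  set u : Fin 3 → Fin R → Fin n → ℝ := fun ℓ ν i => ∑ i', P ℓ i i' * a ℓ ν i'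
  set tail : Fin 3 → ℝ := fun ℓ => ∑ k ∈ Ico (r ℓ) (min n R), σ ℓ k ^ 2
  have hcoef : ∀ ℓ ν i, a ℓ ν i = ∑ k ∈ range (min n R), σ ℓ k * v ℓ k ν * z ℓ k i :=
    fun ℓ ν i => (hsvd ℓ ν i).trans (sum_congr rfl fun _ _ => by ring)
  have hu : ∀ ℓ ν, ∑ i, u ℓ ν i ^ 2 ≤ 1 := fun ℓ ν =>
    ha ℓ ν ▸ sum_sq_proj_le (hz ℓ) (hr ℓ) (hP ℓ) (hcoef ℓ ν)
  have htail : ∀ ℓ, ∑ ν, ∑ i, (a ℓ - u ℓ) ν i ^ 2 = tail ℓ := fun ℓ =>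
    sum_sum_sq_sub_proj (hz ℓ) (hv ℓ) (hr ℓ) (hP ℓ) (hcoef ℓ)
  have hAcp : A = cpTensor ξ (a 0) (a 1) (a 2) := funext fun i => funext fun j => funext (hA i j)
  have hA0cp : A0 = cpTensor ξ (u 0) (u 1) (u 2) := by
    funext i j k
    rw [hA0, hAcp, sum_mul_cpTensor]
  have hξ : √(∑ ν, ξ ν ^ 2) ≤ √C * frobNorm A :=
    (sqrt_le_sqrt hstab).trans_eq (sqrt_mul' C (by positivity))
  show frobNorm (A - A0) ≤ √C * frobNorm A * ∑ ℓ, √(tail ℓ)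
  calc frobNorm (A - A0)
      ≤ √(∑ ν, ξ ν ^ 2) * (√(tail 0) + √(tail 1) + √(tail 2)) := by
        rw [← htail 0, ← htail 1, ← htail 2, hA0cp, hAcp]
        exact frobNorm_cpTensor_sub_cpTensor_le ξ (fun ν => (ha 1 ν).le) (fun ν => (ha 2 ν).le)
          (hu 0) (hu 1)
    _ ≤ √C * frobNorm A * ∑ ℓ, √(tail ℓ) := by
        rw [Fin.sum_univ_three]
        gcongr

theorem rhosvd_relative_error_bound (n R : ℕ) (r : Fin 3 → ℕ)
    (ξ : Fin R → ℝ) (a : Fin 3 → Fin R → Fin n → ℝ)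
    (ha : ∀ ℓ ν, ∑ i, (a ℓ ν i) ^ 2 = 1)
    (σ : Fin 3 → ℕ → ℝ) (z : Fin 3 → ℕ → Fin n → ℝ) (v : Fin 3 → ℕ → Fin R → ℝ)
    (hσnn : ∀ ℓ k, 0 ≤ σ ℓ k)
    (hσdec : ∀ ℓ k k', k ≤ k' → σ ℓ k' ≤ σ ℓ k)
    (hz : ∀ ℓ, ∀ k < min n R, ∀ k' < min n R,
      ∑ i, z ℓ k i * z ℓ k' i = if k = k' then 1 else 0)
    (hv : ∀ ℓ, ∀ k < min n R, ∀ k' < min n R,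
      ∑ ν, v ℓ k ν * v ℓ k' ν = if k = k' then 1 else 0)
    (hsvd : ∀ ℓ ν i, a ℓ ν i = ∑ k ∈ Finset.range (min n R), σ ℓ k * z ℓ k i * v ℓ k ν)
    (hr : ∀ ℓ, r ℓ ≤ min n R)
    (A A0 : Fin n → Fin n → Fin n → ℝ)
    (hA : ∀ i j k, A i j k = ∑ ν, ξ ν * a 0 ν i * a 1 ν j * a 2 ν k)
    (P : Fin 3 → Fin n → Fin n → ℝ)
    (hP : ∀ ℓ i i', P ℓ i i' = ∑ t ∈ Finset.range (r ℓ), z ℓ t i * z ℓ t i')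
    (hA0 : ∀ i j k, A0 i j k =
      ∑ i', ∑ j', ∑ k', P 0 i i' * P 1 j j' * P 2 k k' * A i' j' k')
    (C : ℝ) (hC : 0 < C)
    (hstab : ∑ ν, (ξ ν) ^ 2 ≤ C * ∑ i, ∑ j, ∑ k, (A i j k) ^ 2) :
    Real.sqrt (∑ i, ∑ j, ∑ k, (A i j k - A0 i j k) ^ 2) ≤
      Real.sqrt C * Real.sqrt (∑ i, ∑ j, ∑ k, (A i j k) ^ 2) *
        ∑ ℓ : Fin 3, Real.sqrt (∑ k ∈ Finset.Ico (r ℓ) (min n R), (σ ℓ k) ^ 2) :=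
  rhosvd_relative_error_bound_general n R r ξ a ha σ z v hz hv hsvd hr A A0 hA P hP hA0 C hstab
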